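/- arXiv:2507.22413 — 4 statements merged into one kernel-verified Lean document; each statement's English description precedes it below -/
import Mathlib

section
/- Let ρ_p(m,d) = (Λ_p ⊗ Λ_p)(|ψ_m⟩⟨ψ_m|) where |ψ_m⟩ = (1/√m) Σ_{i=1}^m |ii⟩. Then the eigenvalues of ρ_p(m,d) are: (4p/3d)² + (8p/3dm)(1 − 4p/3) + (1 − 4p/3)² with multiplicity 1; (4p/3d)² + (8p/3dm)(1 − 4p/3) with multiplicity m² − 1; (4p/3d)² + (4p/3dm)(1 − 4p/3) with multiplicity 2m(d − m); and (4p/3d)² with multiplicity (d − m)². -/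
open Matrix Kronecker

variable {d : ℕ}

/-- Partial trace over the first qudit. -/
noncomputable def ptraceFst (ρ : Matrix (Fin d × Fin d) (Fin d × Fin d) ℂ) :
    Matrix (Fin d) (Fin d) ℂ :=
  Matrix.of fun i j => ∑ k : Fin d, ρ (k, i) (k, j)

/-- Partial trace over the second qudit. -/
noncomputable def ptraceSnd (ρ : Matrix (Fin d × Fin d) (Fin d × Fin d) ℂ) :
    Matrix (Fin d) (Fin d) ℂ :=
  Matrix.of fun i j => ∑ k : Fin d, ρ (i, k) (j, k)

/-- The two-qudit local depolarizing channel `Λ_p ⊗ Λ_p`, with `ε = 1 - 4p/3`: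
`ε² ρ + ε(1-ε)((I/d) ⊗ tr₁ρ + tr₂ρ ⊗ (I/d)) + (1-ε)² (Tr ρ) (I/d) ⊗ (I/d)`. -/
noncomputable def depol2 (p : ℝ) (ρ : Matrix (Fin d × Fin d) (Fin d × Fin d) ℂ) :
    Matrix (Fin d × Fin d) (Fin d × Fin d) ℂ :=
  (((1 - 4 * p / 3) ^ 2 : ℝ) : ℂ) • ρ +
    (((1 - 4 * p / 3) * (4 * p / 3) : ℝ) : ℂ) •
      ((((d : ℝ)⁻¹ : ℝ) : ℂ) • ((1 : Matrix (Fin d) (Fin d) ℂ) ⊗ₖ ptraceFst ρ) +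
        (((d : ℝ)⁻¹ : ℝ) : ℂ) • (ptraceSnd ρ ⊗ₖ (1 : Matrix (Fin d) (Fin d) ℂ))) +
    ((((4 * p / 3) ^ 2 / (d : ℝ) ^ 2 : ℝ) : ℂ) * ρ.trace) •
      ((1 : Matrix (Fin d) (Fin d) ℂ) ⊗ₖ (1 : Matrix (Fin d) (Fin d) ℂ))

/-- The rank-`m` maximally entangled two-qudit probe `|ψ_m⟩ = (1/√m) Σ_{i<m} |ii⟩`. -/
noncomputable def psiVec (m : ℕ) : Fin d × Fin d → ℂ :=
  fun x => if x.1 = x.2 ∧ (x.1 : ℕ) < m then ((Real.sqrt m)⁻¹ : ℝ) else 0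

/-! With `ε = 1 - 4p/3`, both reduced states of `ψ_m` are `I_m / m`, so the output state is
`D + ε² |ψ_m⟩⟨ψ_m|` with `D` diagonal in the product basis: its entry at `|ij⟩` is
`(4p/3d)² + (4p/3dm) ε k`, where `k` is the number of indices among `i, j` below `m`.
The probe is supported on basis vectors with `k = 2`, so it is an eigenvector of `D` for
`λ₂`, and by the matrix determinant lemma the rank-one term only moves one copy of `λ₂`
to `λ₂ + ε² = λ₁`. The multiplicities count the basis vectors `|ij⟩` by `k`. -/

@[to_additive]
theorem Fin.prod_ite_val_lt {M : Type*} [CommMonoid M] (n m : ℕ) (a b : M) :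
    ∏ i : Fin n, (if (i : ℕ) < m then a else b) = a ^ min n m * b ^ (n - m) := by
  rw [Finset.prod_ite, Finset.prod_const, Finset.prod_const, Fin.card_filter_val_lt,
    Finset.filter_not, Finset.card_sdiff_of_subset (Finset.filter_subset _ _),
    Fin.card_filter_val_lt, Finset.card_univ, Fintype.card_fin]
  congr 2
  omega

namespace Matrix

variable {K n : Type*} [Field K] [Fintype n] [DecidableEq n]

theorem det_diagonal_add_vecMulVec {g : n → K} (hg : ∀ i, g i ≠ 0) (u w : n → K) :
    (diagonal g + vecMulVec u w).det = (∏ i, g i) * (1 + ∑ i, w i * u i / g i) := by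
  have hfactor : diagonal g + vecMulVec u w =
      diagonal g * (1 + replicateCol Unit (fun i => u i / g i) * replicateRow Unit w) := by
    rw [← vecMulVec_eq, Matrix.mul_add, Matrix.mul_one]
    ext i j
    simp only [Matrix.add_apply, vecMulVec_apply, diagonal_mul]
    field_simp [hg i]
  rw [hfactor, det_mul, det_diagonal, det_one_add_replicateCol_mul_replicateRow, dotProduct]
  simp only [mul_div_assoc]

open Polynomial in
theorem charpoly_diagonal_add_vecMulVec_mul_X_sub_C [Infinite K] {g u : n → K} {μ : K}
    (hu : ∀ i, u i ≠ 0 → g i = μ) (w : n → K) :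
    (diagonal g + vecMulVec u w).charpoly * (X - C μ) =
      (∏ i, (X - C (g i))) * (X - C (μ + w ⬝ᵥ u)) := by
  refine eq_of_infinite_eval_eq _ _ ((Set.finite_range g).union (Set.finite_singleton μ)
    |>.infinite_compl.mono fun x hx => ?_)
  simp only [Set.mem_compl_iff, Set.mem_union, Set.mem_range, Set.mem_singleton_iff, not_or,
    not_exists] at hx
  obtain ⟨hxg, hxμ⟩ := hx
  have hsub : scalar n x - (diagonal g + vecMulVec u w) =
      diagonal (fun i => x - g i) + vecMulVec (-u) w := by
    ext i j
    rcases eq_or_ne i j with rfl | hij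
    · simp only [Matrix.sub_apply, Matrix.add_apply, scalar_apply, diagonal_apply_eq,
        vecMulVec_apply, Pi.neg_apply]
      ring
    · simp [hij, vecMulVec_apply]
  have hsum : ∑ i, w i * (-u) i / (x - g i) = -(w ⬝ᵥ u) / (x - μ) := by
    rw [dotProduct, ← Finset.sum_neg_distrib, Finset.sum_div]
    refine Finset.sum_congr rfl fun i _ => ?_
    by_cases hui : u i = 0
    · simp [hui]
    · rw [hu i hui, Pi.neg_apply, mul_neg, neg_div]
  simp only [Set.mem_ofPred_eq, eval_mul, eval_sub, eval_X, eval_C, eval_prod, eval_charpoly,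
    hsub, det_diagonal_add_vecMulVec (fun i => sub_ne_zero.mpr (Ne.symm (hxg i))), hsum]
  field_simp [sub_ne_zero.mpr hxμ]
  ring

end Matrix

section Probe

variable {d : ℕ}

def lowCount (m : ℕ) (x : Fin d × Fin d) : ℕ :=
  (if (x.1 : ℕ) < m then 1 else 0) + (if (x.2 : ℕ) < m then 1 else 0)

theorem prod_lowCount {M : Type*} [CommMonoid M] (m : ℕ) (F : ℕ → M) :
    ∏ x : Fin d × Fin d, F (lowCount m x) =
      F 2 ^ (min d m ^ 2) * F 1 ^ (2 * min d m * (d - m)) * F 0 ^ ((d - m) ^ 2) := by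
  have hrow : ∀ i : Fin d, ∏ j : Fin d, F (lowCount m (i, j)) =
      if (i : ℕ) < m then F 2 ^ min d m * F 1 ^ (d - m) else F 1 ^ min d m * F 0 ^ (d - m) := by
    intro i
    split_ifs with hi <;> simp [lowCount, hi, add_ite, apply_ite F, Fin.prod_ite_val_lt]
  rw [Fintype.prod_prod_type, Finset.prod_congr rfl fun i _ => hrow i, Fin.prod_ite_val_lt,
    mul_pow, mul_pow, ← pow_mul, ← pow_mul, ← pow_mul, ← pow_mul, sq, sq,
    show 2 * min d m * (d - m) = (d - m) * min d m + min d m * (d - m) by ring, pow_add]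
  ac_rfl

theorem star_psiVec (m : ℕ) : star (psiVec (d := d) m) = psiVec m := by
  ext x
  simp [psiVec, apply_ite (star : ℂ → ℂ)]

theorem psiVec_mul_psiVec (m : ℕ) (x y : Fin d × Fin d) :
    psiVec m x * psiVec m y =
      if (x.1 = x.2 ∧ (x.1 : ℕ) < m) ∧ (y.1 = y.2 ∧ (y.1 : ℕ) < m) then (m : ℂ)⁻¹ else 0 := by
  unfold psiVec
  by_cases hx : x.1 = x.2 ∧ (x.1 : ℕ) < m
  · by_cases hy : y.1 = y.2 ∧ (y.1 : ℕ) < m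
    · rw [if_pos hx, if_pos hy, if_pos ⟨hx, hy⟩, ← Complex.ofReal_mul, ← mul_inv,
        Real.mul_self_sqrt m.cast_nonneg, Complex.ofReal_inv, Complex.ofReal_natCast]
    · simp [hy]
  · simp [hx]

theorem lowCount_eq_two_of_psiVec_ne_zero {m : ℕ} {x : Fin d × Fin d} (hx : psiVec m x ≠ 0) :
    lowCount m x = 2 := by
  obtain ⟨hdiag, hlt⟩ : x.1 = x.2 ∧ (x.1 : ℕ) < m := by
    by_contra h
    exact hx (if_neg h)
  simp [lowCount, hlt, ← hdiag]

theorem psiVec_dotProduct_self {m : ℕ} (hm : 1 ≤ m) (hmd : m ≤ d) :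
    psiVec (d := d) m ⬝ᵥ psiVec m = 1 := by
  simp only [dotProduct, psiVec_mul_psiVec, and_self, Fintype.sum_prod_type, ite_and,
    Finset.sum_ite_eq, Finset.mem_univ, if_true, Fin.sum_ite_val_lt, min_eq_right hmd,
    smul_zero, add_zero, nsmul_eq_mul]
  exact mul_inv_cancel₀ (Nat.cast_ne_zero.mpr (by omega))

theorem ptraceFst_vecMulVec_psiVec (m : ℕ) :
    ptraceFst (vecMulVec (psiVec (d := d) m) (star (psiVec m))) =
      diagonal fun i : Fin d => if (i : ℕ) < m then (m : ℂ)⁻¹ else 0 := by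
  ext i j
  simp only [ptraceFst, star_psiVec, of_apply, vecMulVec_apply, psiVec_mul_psiVec]
  rw [Finset.sum_eq_single i]
  · by_cases hij : i = j <;> simp [hij]
  · intro k _ hki
    simp [hki]
  · simp

theorem ptraceSnd_vecMulVec_psiVec (m : ℕ) :
    ptraceSnd (vecMulVec (psiVec (d := d) m) (star (psiVec m))) =
      diagonal fun i : Fin d => if (i : ℕ) < m then (m : ℂ)⁻¹ else 0 := by
  ext i j
  simp only [ptraceSnd, star_psiVec, of_apply, vecMulVec_apply, psiVec_mul_psiVec]
  rw [Finset.sum_eq_single i]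
  · rcases eq_or_ne i j with rfl | hij
    · simp
    · simp [hij, hij.symm]
  · intro k _ hki
    simp [Ne.symm hki]
  · simp

/-- The diagonal entry of the output state at those `|ij⟩` with `k` of the indices `i, j`
below `m`. -/
noncomputable def depol2PsiDiag (d m : ℕ) (p : ℝ) (k : ℕ) : ℂ :=
  (4 * p / (3 * d)) ^ 2 + 4 * p / (3 * d * m) * (1 - 4 * p / 3) * k

theorem depol2_vecMulVec_psiVec {m : ℕ} (hm : 1 ≤ m) (hmd : m ≤ d) (p : ℝ) :
    depol2 p (vecMulVec (psiVec (d := d) m) (star (psiVec m))) =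
      diagonal (fun x => depol2PsiDiag d m p (lowCount m x)) +
        vecMulVec ((((1 - 4 * p / 3) ^ 2 : ℝ) : ℂ) • psiVec m) (psiVec m) := by
  rw [depol2, ptraceFst_vecMulVec_psiVec, ptraceSnd_vecMulVec_psiVec, trace_vecMulVec,
    star_psiVec, psiVec_dotProduct_self hm hmd, ← diagonal_one, diagonal_kronecker_diagonal,
    diagonal_kronecker_diagonal, diagonal_kronecker_diagonal, smul_vecMulVec]
  ext x y
  rcases eq_or_ne x y with rfl | hxy
  · simp only [Matrix.add_apply, Matrix.smul_apply, diagonal_apply_eq, smul_eq_mul,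
      depol2PsiDiag, lowCount, vecMulVec_apply, psiVec_mul_psiVec]
    push_cast
    split_ifs <;> ring
  · simp [hxy]

end Probe

open Polynomial in
theorem depol2_output_eigenvalues_general
    (m : ℕ) (hm : 1 ≤ m) (hmd : m ≤ d) (p : ℝ) :
    (depol2 p (Matrix.vecMulVec (psiVec (d := d) m) (star (psiVec (d := d) m)))).charpoly =
      (X - C (((4 * p / (3 * d)) ^ 2 + (8 * p / (3 * d * m)) * (1 - 4 * p / 3)
              + (1 - 4 * p / 3) ^ 2 : ℝ) : ℂ)) *
      (X - C (((4 * p / (3 * d)) ^ 2 + (8 * p / (3 * d * m)) * (1 - 4 * p / 3) : ℝ) : ℂ)) ^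
          (m ^ 2 - 1) *
      (X - C (((4 * p / (3 * d)) ^ 2 + (4 * p / (3 * d * m)) * (1 - 4 * p / 3) : ℝ) : ℂ)) ^
          (2 * m * (d - m)) *
      (X - C (((4 * p / (3 * d)) ^ 2 : ℝ) : ℂ)) ^ ((d - m) ^ 2) := by
  have hsupp : ∀ x, ((((1 - 4 * p / 3) ^ 2 : ℝ) : ℂ) • psiVec (d := d) m) x ≠ 0 →
      depol2PsiDiag d m p (lowCount m x) = depol2PsiDiag d m p 2 := fun x hx => by
    rw [lowCount_eq_two_of_psiVec_ne_zero (right_ne_zero_of_smul (M := ℂ) (A := ℂ) hx)]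
  apply mul_right_cancel₀ (X_sub_C_ne_zero (depol2PsiDiag d m p 2))
  rw [depol2_vecMulVec_psiVec hm hmd, charpoly_diagonal_add_vecMulVec_mul_X_sub_C hsupp,
    prod_lowCount m fun k => X - C (depol2PsiDiag d m p k), min_eq_right hmd, dotProduct_smul,
    psiVec_dotProduct_self hm hmd, smul_eq_mul, mul_one]
  obtain ⟨k, hk⟩ : ∃ k, m ^ 2 = k + 1 := ⟨m ^ 2 - 1, by have := Nat.one_le_pow 2 m hm; omega⟩
  rw [hk, Nat.add_sub_cancel]
  simp only [depol2PsiDiag]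
  push_cast
  ring_nf

open Polynomial in
/-- The eigenvalues of `ρ_p(m,d) = (Λ_p ⊗ Λ_p)(|ψ_m⟩⟨ψ_m|)` are
`λ₁ = (4p/3d)² + (8p/3dm)(1−4p/3) + (1−4p/3)²` (multiplicity 1),
`λ₂ = (4p/3d)² + (8p/3dm)(1−4p/3)` (multiplicity `m²−1`),
`λ₃ = (4p/3d)² + (4p/3dm)(1−4p/3)` (multiplicity `2m(d−m)`), and
`λ₄ = (4p/3d)²` (multiplicity `(d−m)²`), stated via the characteristic polynomial. -/
theorem depol2_output_eigenvalues
    (m : ℕ) (hm : 1 ≤ m) (hmd : m ≤ d) (p : ℝ) (hp0 : 0 ≤ p) (hp1 : p ≤ 3 / 4) :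
    (depol2 p (Matrix.vecMulVec (psiVec (d := d) m) (star (psiVec (d := d) m)))).charpoly =
      (X - C (((4 * p / (3 * d)) ^ 2 + (8 * p / (3 * d * m)) * (1 - 4 * p / 3)
              + (1 - 4 * p / 3) ^ 2 : ℝ) : ℂ)) *
      (X - C (((4 * p / (3 * d)) ^ 2 + (8 * p / (3 * d * m)) * (1 - 4 * p / 3) : ℝ) : ℂ)) ^
          (m ^ 2 - 1) *
      (X - C (((4 * p / (3 * d)) ^ 2 + (4 * p / (3 * d * m)) * (1 - 4 * p / 3) : ℝ) : ℂ)) ^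
          (2 * m * (d - m)) *
      (X - C (((4 * p / (3 * d)) ^ 2 : ℝ) : ℂ)) ^ ((d - m) ^ 2) :=
  depol2_output_eigenvalues_general m hm hmd p
end

section
/- Let |ψ₀⟩ = Σ_{i=1}^d √c_i |ii⟩ with c_i ≥ 0, Σ c_i = 1, be a pure two-qudit state, and let ρ_p = (Λ_p ⊗ Λ_p)(|ψ₀⟩⟨ψ₀|) with 0 < p < 3/4. If [|ψ₀⟩⟨ψ₀|, ρ_p] = 0, then for every pair of indices i, j with c_i > 0 and c_j > 0 we have c_i = c_j; i.e., all nonzero Schmidt coefficients are equal. -/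
open Matrix Kronecker

variable {d : ℕ}

/-- The Schmidt-form two-qudit state `|ψ₀⟩ = Σ_i √c_i |ii⟩`. -/
noncomputable def schmidtVec (c : Fin d → ℝ) : Fin d × Fin d → ℂ :=
  fun x => if x.1 = x.2 then ((Real.sqrt (c x.1) : ℝ) : ℂ) else 0


lemma aux_P_apply (c : Fin d → ℝ) (x y : Fin d × Fin d) :
    Matrix.vecMulVec (schmidtVec c) (star (schmidtVec c)) x y
      = schmidtVec c x * schmidtVec c y := by
  simp [Matrix.vecMulVec_apply, Pi.star_apply, schmidtVec, apply_ite (star : ℂ → ℂ),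
    Complex.star_def, Complex.conj_ofReal]

lemma aux_ptraceFst (c : Fin d → ℝ) (hc : ∀ i, 0 ≤ c i) (i j : Fin d) :
    ptraceFst (Matrix.vecMulVec (schmidtVec c) (star (schmidtVec c))) i j
      = if i = j then (c i : ℂ) else 0 := by
  simp only [ptraceFst, Matrix.of_apply, aux_P_apply]
  rw [Finset.sum_eq_single i (fun k _ hk => by simp [schmidtVec, hk]) (by simp)]
  by_cases h : i = j <;>
    simp [schmidtVec, h, ← Complex.ofReal_mul, Real.mul_self_sqrt (hc j)]

lemma aux_ptraceSnd (c : Fin d → ℝ) (hc : ∀ i, 0 ≤ c i) (i j : Fin d) :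
    ptraceSnd (Matrix.vecMulVec (schmidtVec c) (star (schmidtVec c))) i j
      = if i = j then (c i : ℂ) else 0 := by
  simp only [ptraceSnd, Matrix.of_apply, aux_P_apply]
  rw [Finset.sum_eq_single i (fun k _ hk => by simp [schmidtVec, Ne.symm hk]) (by simp)]
  by_cases h : i = j
  · simp [schmidtVec, h, ← Complex.ofReal_mul, Real.mul_self_sqrt (hc j)]
  · simp [schmidtVec, h, Ne.symm h]

lemma aux_trace (c : Fin d → ℝ) (hc : ∀ i, 0 ≤ c i) (hsum : ∑ i, c i = 1) :
    (Matrix.vecMulVec (schmidtVec c) (star (schmidtVec c))).trace = 1 := by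
  simp only [Matrix.trace, Matrix.diag, aux_P_apply]
  rw [Fintype.sum_prod_type]
  have h1 : ∀ a : Fin d,
      (∑ b : Fin d, schmidtVec c (a, b) * schmidtVec c (a, b)) = (c a : ℂ) := by
    intro a
    rw [Finset.sum_eq_single a (fun b _ hb => by simp [schmidtVec, Ne.symm hb]) (by simp)]
    simp [schmidtVec, ← Complex.ofReal_mul, Real.mul_self_sqrt (hc a)]
  rw [Finset.sum_congr rfl fun a _ => h1 a, ← Complex.ofReal_sum]
  simp [hsum]

lemma aux_sumv (c : Fin d → ℝ) (hc : ∀ i, 0 ≤ c i) (hsum : ∑ i, c i = 1) :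
    (∑ z : Fin d × Fin d, schmidtVec c z * schmidtVec c z) = 1 := by
  have := aux_trace c hc hsum
  simpa only [Matrix.trace, Matrix.diag, aux_P_apply] using this

lemma aux_M_col (c : Fin d → ℝ) (hc : ∀ i, 0 ≤ c i) (hsum : ∑ i, c i = 1) (p : ℝ)
    (z : Fin d × Fin d) (j : Fin d) :
    depol2 p (Matrix.vecMulVec (schmidtVec c) (star (schmidtVec c))) z (j, j)
      = (((1 - 4 * p / 3) ^ 2 : ℝ) : ℂ) * (schmidtVec c z * schmidtVec c (j, j))
        + (if z = (j, j) then
            (((1 - 4 * p / 3) * (4 * p / 3) * (d : ℝ)⁻¹ * (2 * c j)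
              + (4 * p / 3) ^ 2 / (d : ℝ) ^ 2 : ℝ) : ℂ) else 0) := by
  obtain ⟨a, b⟩ := z
  simp only [depol2, Matrix.add_apply, Matrix.smul_apply, Matrix.kroneckerMap_apply,
    Matrix.one_apply, aux_ptraceFst c hc, aux_ptraceSnd c hc, aux_trace c hc hsum,
    aux_P_apply, smul_eq_mul, Prod.mk.injEq]
  split_ifs <;> simp_all <;> push_cast <;> ring

lemma aux_M_row (c : Fin d → ℝ) (hc : ∀ i, 0 ≤ c i) (hsum : ∑ i, c i = 1) (p : ℝ)
    (i : Fin d) (z : Fin d × Fin d) :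
    depol2 p (Matrix.vecMulVec (schmidtVec c) (star (schmidtVec c))) (i, i) z
      = (((1 - 4 * p / 3) ^ 2 : ℝ) : ℂ) * (schmidtVec c (i, i) * schmidtVec c z)
        + (if z = (i, i) then
            (((1 - 4 * p / 3) * (4 * p / 3) * (d : ℝ)⁻¹ * (2 * c i)
              + (4 * p / 3) ^ 2 / (d : ℝ) ^ 2 : ℝ) : ℂ) else 0) := by
  obtain ⟨a, b⟩ := z
  simp only [depol2, Matrix.add_apply, Matrix.smul_apply, Matrix.kroneckerMap_apply,
    Matrix.one_apply, aux_ptraceFst c hc, aux_ptraceSnd c hc, aux_trace c hc hsum,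
    aux_P_apply, smul_eq_mul, Prod.mk.injEq]
  rcases eq_or_ne a i with ha | ha <;> rcases eq_or_ne b i with hb | hb
  · subst ha; subst hb; simp; try (push_cast; ring)
  · subst ha; simp [hb, Ne.symm hb]; try (push_cast; ring)
  · subst hb; simp [ha, Ne.symm ha]; try (push_cast; ring)
  · simp [ha, hb, Ne.symm ha, Ne.symm hb]; try (push_cast; ring)

/-- If the pure probe `|ψ₀⟩⟨ψ₀|` commutes with its depolarized image
`ρ_p = (Λ_p ⊗ Λ_p)(|ψ₀⟩⟨ψ₀|)` for some `0 < p < 3/4`, then all nonzero Schmidt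
coefficients of `|ψ₀⟩` are equal. -/
theorem commuting_depol_probe_has_equal_schmidt_coeffs
    (c : Fin d → ℝ) (hc : ∀ i, 0 ≤ c i) (hsum : ∑ i, c i = 1)
    (p : ℝ) (hp0 : 0 < p) (hp1 : p < 3 / 4)
    (hcomm : Commute
      (Matrix.vecMulVec (schmidtVec c) (star (schmidtVec c)))
      (depol2 p (Matrix.vecMulVec (schmidtVec c) (star (schmidtVec c))))) :
    ∀ i j, 0 < c i → 0 < c j → c i = c j := by
  intro i j hi hj
  set P := Matrix.vecMulVec (schmidtVec c) (star (schmidtVec c)) with hPdef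
  set M := depol2 p P with hMdef
  set v : Fin d × Fin d → ℂ := schmidtVec c with hvdef
  set K : Fin d → ℂ := fun k =>
    (((1 - 4 * p / 3) * (4 * p / 3) * (d : ℝ)⁻¹ * (2 * c k)
      + (4 * p / 3) ^ 2 / (d : ℝ) ^ 2 : ℝ) : ℂ) with hKdef
  set E : ℂ := (((1 - 4 * p / 3) ^ 2 : ℝ) : ℂ) * (v (i, i) * v (j, j)) with hEdef
  have h2 : (P * M) (i, i) (j, j) = (M * P) (i, i) (j, j) := by rw [hcomm.eq]
  rw [Matrix.mul_apply, Matrix.mul_apply] at h2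
  have e1 : ∀ z : Fin d × Fin d, P (i, i) z * M z (j, j)
      = E * (v z * v z) + (if z = (j, j) then v (i, i) * v (j, j) * K j else 0) := by
    intro z
    rw [hMdef, hPdef, aux_P_apply, aux_M_col c hc hsum p z j]
    by_cases hz : z = (j, j)
    · subst hz; rw [if_pos rfl, if_pos rfl]; simp only [hEdef]; ring
    · simp only [hz, if_neg, if_false]; rw [hEdef]; ring
  have e2 : ∀ z : Fin d × Fin d, M (i, i) z * P z (j, j)
      = E * (v z * v z) + (if z = (i, i) then v (i, i) * v (j, j) * K i else 0) := by
    intro z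
    rw [hMdef, hPdef, aux_P_apply, aux_M_row c hc hsum p i z]
    by_cases hz : z = (i, i)
    · subst hz; rw [if_pos rfl, if_pos rfl]; simp only [hEdef]; ring
    · simp only [hz, if_neg, if_false]; rw [hEdef]; ring
  rw [Finset.sum_congr rfl (fun z _ => e1 z), Finset.sum_congr rfl (fun z _ => e2 z),
    Finset.sum_add_distrib, Finset.sum_add_distrib, ← Finset.mul_sum,
    hvdef, aux_sumv c hc hsum,
    Finset.sum_ite_eq' Finset.univ ((j, j) : Fin d × Fin d),
    Finset.sum_ite_eq' Finset.univ ((i, i) : Fin d × Fin d)] at h2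
  simp only [Finset.mem_univ, if_true] at h2
  have hvi : v (i, i) ≠ 0 := by
    simp [hvdef, schmidtVec, Complex.ofReal_ne_zero]
    exact (Real.sqrt_pos.mpr hi).ne'
  have hvj : v (j, j) ≠ 0 := by
    simp [hvdef, schmidtVec, Complex.ofReal_ne_zero]
    exact (Real.sqrt_pos.mpr hj).ne'
  have hK : K j = K i := by
    have hB : v (i, i) * v (j, j) * K j = v (i, i) * v (j, j) * K i := by
      have := h2
      linear_combination this
    have := mul_left_cancel₀ (mul_ne_zero hvi hvj) hB
    exact this
  rw [hKdef] at hK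
  beta_reduce at hK
  have hKr : (1 - 4 * p / 3) * (4 * p / 3) * (d : ℝ)⁻¹ * (2 * c j)
      + (4 * p / 3) ^ 2 / (d : ℝ) ^ 2
      = (1 - 4 * p / 3) * (4 * p / 3) * (d : ℝ)⁻¹ * (2 * c i)
      + (4 * p / 3) ^ 2 / (d : ℝ) ^ 2 := by
    exact_mod_cast hK
  have hd : (0 : ℝ) < d := by exact_mod_cast i.pos
  have hε : (0 : ℝ) < 1 - 4 * p / 3 := by linarith
  have hA : (0 : ℝ) < (1 - 4 * p / 3) * (4 * p / 3) * (d : ℝ)⁻¹ * 2 := by positivity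
  have h4 : (1 - 4 * p / 3) * (4 * p / 3) * (d : ℝ)⁻¹ * 2 * (c j - c i) = 0 := by
    linear_combination hKr
  rcases mul_eq_zero.mp h4 with h | h
  · exact absurd h hA.ne'
  · linarith
end

section
/- For p ∈ (0,1), the Fisher information of the probability distribution {(1−p)² + p², 2p(1−p)} equals 4(1−2p)²/((1−p)² + p²) + 2(1−2p)²/(p(1−p)), and this quantity is at most 2/(p(1−p)). -/
/-! Merging the outcomes `(1-p)²` and `p²` of the three-outcome distribution
`{(1-p)², 2p(1-p), p²}` gives the two-outcome one. By Sedrakyan's lemma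
`(a + b)² / (x + y) ≤ a² / x + b² / y`, merging outcomes cannot increase the Fisher
information, and the three-outcome Fisher information is `2 / (p(1-p))`. -/

theorem add_sq_div_add_le {R : Type*} [Field R] [LinearOrder R] [IsStrictOrderedRing R]
    (a b : R) {x y : R} (hx : 0 < x) (hy : 0 < y) :
    (a + b) ^ 2 / (x + y) ≤ a ^ 2 / x + b ^ 2 / y := by
  simpa [Fin.sum_univ_two] using Finset.sq_sum_div_le_sum_sq_div Finset.univ ![a, b]
    (g := ![x, y]) (by simp [Fin.forall_fin_two, hx, hy])

theorem hasDerivAt_one_sub_sq_add_sq (p : ℝ) :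
    HasDerivAt (fun q : ℝ => (1 - q) ^ 2 + q ^ 2) (-2 * (1 - 2 * p)) p :=
  ((((hasDerivAt_id' p).const_sub 1).pow 2).add ((hasDerivAt_id' p).pow 2)).congr_deriv
    (by norm_num; ring)

theorem hasDerivAt_two_mul_mul_one_sub (p : ℝ) :
    HasDerivAt (fun q : ℝ => 2 * q * (1 - q)) (2 * (1 - 2 * p)) p :=
  (((hasDerivAt_id' p).const_mul 2).mul ((hasDerivAt_id' p).const_sub 1)).congr_deriv
    (by ring)

theorem sq_two_mul_div_two_mul (a b : ℝ) : (2 * a) ^ 2 / (2 * b) = 2 * a ^ 2 / b := by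
  rw [mul_pow, show (2 : ℝ) ^ 2 * a ^ 2 = 2 * (2 * a ^ 2) by ring,
    mul_div_mul_left _ _ two_ne_zero]

theorem fisher_info_three_outcome_bitflip {p : ℝ} (hp0 : 0 < p) (hp1 : p < 1) :
    (-2 * (1 - p)) ^ 2 / (1 - p) ^ 2 + 2 * (1 - 2 * p) ^ 2 / (p * (1 - p))
      + (2 * p) ^ 2 / p ^ 2 = 2 / (p * (1 - p)) := by
  have : 1 - p ≠ 0 := by linarith
  field_simp
  ring

/-- For `p ∈ (0,1)`, the Fisher information of the probability distribution
`{(1−p)² + p², 2p(1−p)}` equals `4(1−2p)²/((1−p)²+p²) + 2(1−2p)²/(p(1−p))`,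
and this is at most `2/(p(1−p))`. -/
theorem fisher_info_two_outcome_bitflip (p : ℝ) (hp0 : 0 < p) (hp1 : p < 1) :
    ((deriv (fun q : ℝ => (1 - q) ^ 2 + q ^ 2) p) ^ 2 / ((1 - p) ^ 2 + p ^ 2)
        + (deriv (fun q : ℝ => 2 * q * (1 - q)) p) ^ 2 / (2 * p * (1 - p))
      = 4 * (1 - 2 * p) ^ 2 / ((1 - p) ^ 2 + p ^ 2)
        + 2 * (1 - 2 * p) ^ 2 / (p * (1 - p))) ∧
      4 * (1 - 2 * p) ^ 2 / ((1 - p) ^ 2 + p ^ 2) + 2 * (1 - 2 * p) ^ 2 / (p * (1 - p))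
        ≤ 2 / (p * (1 - p)) := by
  refine ⟨?_, ?_⟩
  · rw [(hasDerivAt_one_sub_sq_add_sq p).deriv, (hasDerivAt_two_mul_mul_one_sub p).deriv,
      mul_assoc 2 p, sq_two_mul_div_two_mul]
    ring
  · have merged : 4 * (1 - 2 * p) ^ 2 / ((1 - p) ^ 2 + p ^ 2)
        ≤ (-2 * (1 - p)) ^ 2 / (1 - p) ^ 2 + (2 * p) ^ 2 / p ^ 2 :=
      calc 4 * (1 - 2 * p) ^ 2 / ((1 - p) ^ 2 + p ^ 2)
          = (-2 * (1 - p) + 2 * p) ^ 2 / ((1 - p) ^ 2 + p ^ 2) := by ring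
        _ ≤ _ := add_sq_div_add_le _ _ (pow_pos (sub_pos.mpr hp1) 2) (pow_pos hp0 2)
    linarith [fisher_info_three_outcome_bitflip hp0 hp1]
end

section
/- The function g(x) = 3/(3−4p+4px)² − (3−4p)/(3−4p+2px)² is strictly positive for all x ∈ [0,1] whenever p ∈ (0, 3/4): it is positive at x = 0 and x = 1, and positive throughout the interval. -/
/-- For `p ∈ (0, 3/4)`, the function
`g(x) = 3/(3−4p+4px)² − (3−4p)/(3−4p+2px)²` is strictly positive on `[0,1]`. -/
theorem depol_qfi_monotonicity_aux (p : ℝ) (hp0 : 0 < p) (hp1 : p < 3 / 4)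
    (x : ℝ) (hx0 : 0 ≤ x) (hx1 : x ≤ 1) :
    0 < 3 / (3 - 4 * p + 4 * p * x) ^ 2 - (3 - 4 * p) / (3 - 4 * p + 2 * p * x) ^ 2 := by
  have hpx : 0 ≤ p * x := mul_nonneg hp0.le hx0
  have hc : 0 < 3 - 4 * p := by linarith
  have hA : 0 < 3 - 4 * p + 4 * p * x := by nlinarith
  have hB : 0 < 3 - 4 * p + 2 * p * x := by nlinarith
  rw [sub_pos, div_lt_div_iff₀ (by positivity) (by positivity)]
  -- 3B² - (3-4p)A² = 4p·(c²(1-x)² + 3c·x(1-x) + 3p·x²) with c = 3-4p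
  rcases hx0.eq_or_lt with h | h
  · subst h; nlinarith [mul_pos hp0 (mul_pos hc hc)]
  · nlinarith [mul_pos hp0 (mul_pos hp0 (mul_pos h h)),
      mul_nonneg (mul_nonneg hp0.le (mul_pos hc hc).le) (sq_nonneg (1 - x)),
      mul_nonneg (mul_nonneg hp0.le hc.le) (mul_nonneg hx0 (sub_nonneg.2 hx1))]
end
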